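/- arXiv:1811.00911 — 6 statements merged into one kernel-verified Lean document; each statement's English description precedes it below -/
import Mathlib

section
/- For every positive integer K, every real number B ∈ [0,1], and all real numbers b_1, …, b_K ∈ [0,B], one has 1 − ∏_{k=1}^K (1 − b_k) ≥ (1 − (K−1)B/2) · Σ_{k=1}^K b_k. -/
lemma weier_aux (n : ℕ) (b : Fin n → ℝ) (h0 : ∀ k, 0 ≤ b k) (h1 : ∀ k, b k ≤ 1) :
    1 - ∑ k, b k ≤ ∏ k, (1 - b k) := by
  induction n with
  | zero => simp
  | succ m ih =>
    rw [Fin.sum_univ_castSucc, Fin.prod_univ_castSucc]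
    have hP0 : 0 ≤ ∏ k : Fin m, (1 - b k.castSucc) :=
      Finset.prod_nonneg fun k _ => by linarith [h1 k.castSucc]
    have hW := ih (fun k => b k.castSucc) (fun k => h0 _) (fun k => h1 _)
    have hb := h0 (Fin.last m)
    have hb1 := h1 (Fin.last m)
    have hS0 : (0:ℝ) ≤ ∑ k : Fin m, b k.castSucc :=
      Finset.sum_nonneg fun k _ => h0 _
    nlinarith [mul_le_mul_of_nonneg_right hW (by linarith : (0:ℝ) ≤ 1 - b (Fin.last m)),
      mul_nonneg hS0 hb]

/-- For every positive integer `K`, every real `B ∈ [0,1]`, and reals `b 1, …, b K ∈ [0,B]`: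
`1 − ∏ (1 − b k) ≥ (1 − (K−1)B/2) ∑ b k`. -/
theorem stmt_3 (K : ℕ) (hK : 0 < K) (B : ℝ) (hB0 : 0 ≤ B) (hB1 : B ≤ 1)
    (b : Fin K → ℝ) (hb0 : ∀ k, 0 ≤ b k) (hbB : ∀ k, b k ≤ B) :
    (1 - ((K : ℝ) - 1) * B / 2) * (∑ k, b k) ≤ 1 - ∏ k, (1 - b k) := by
  clear hK
  induction K with
  | zero => simp
  | succ n ih =>
    rw [Fin.sum_univ_castSucc, Fin.prod_univ_castSucc]
    have h1 : ∀ k : Fin n, b (Fin.castSucc k) ≤ 1 := fun k => le_trans (hbB _) hB1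
    have hW := weier_aux n (fun k => b k.castSucc) (fun k => hb0 _) h1
    have ihn := ih (fun k => b k.castSucc) (fun k => hb0 _) (fun k => hbB _)
    set S := ∑ k : Fin n, b k.castSucc with hS
    set P := ∏ k : Fin n, (1 - b k.castSucc) with hP
    have hb := hb0 (Fin.last n)
    have hbB' := hbB (Fin.last n)
    have hS0 : 0 ≤ S := Finset.sum_nonneg fun k _ => hb0 _
    have hSn : S ≤ (n : ℝ) * B := by
      calc S ≤ ∑ _k : Fin n, B := Finset.sum_le_sum fun k _ => hbB _
        _ = (n : ℝ) * B := by simp [mul_comm]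
    have hP0 : 0 ≤ P := Finset.prod_nonneg fun k _ => by linarith [h1 k]
    have hbP : b (Fin.last n) * (1 - S) ≤ b (Fin.last n) * P :=
      mul_le_mul_of_nonneg_left hW hb
    have h2 : 0 ≤ (B - b (Fin.last n)) * S := mul_nonneg (by linarith) hS0
    have h3 : 0 ≤ b (Fin.last n) * ((n : ℝ) * B - S) := mul_nonneg hb (by linarith)
    push_cast
    nlinarith [hbP, h2, h3, ihn]
end

section
/- For every positive integer K, every real number B ∈ [0,1], and all real numbers b_1, …, b_K ∈ [0,B], the following refined lower bound holds: 1 − ∏_{k=1}^K (1 − b_k) ≥ (1 − (K−1)B/2 + (K−1)(K−2)B²/(2K)) · Σ_{k=1}^K b_k. -/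
lemma pow_bound (B : ℝ) (hB0 : 0 ≤ B) (hB1 : B ≤ 1) :
    ∀ K : ℕ, 1 ≤ K →
      (1-B)^K ≤ 1 - K*B + K*(K-1)/2*B^2 - (K-1)*(K-2)/2*B^3 := by
  intro K hK
  induction K, hK using Nat.le_induction with
  | base => norm_num
  | succ n hn ih =>
    have h1B : (0:ℝ) ≤ 1 - B := by linarith
    have h2 : (1-B) * (1-B)^n
        ≤ (1-B) * (1 - n*B + n*(n-1)/2*B^2 - (n-1)*(n-2)/2*B^3) :=
      mul_le_mul_of_nonneg_left ih h1B
    have hc : (0:ℝ) ≤ ((n:ℝ)-1)*((n:ℝ)-2) := by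
      rcases le_or_gt 2 n with h | h
      · have : (2:ℝ) ≤ n := by exact_mod_cast h
        nlinarith
      · have hn1 : n = 1 := by omega
        simp [hn1]
    have key : (0:ℝ) ≤ ((n:ℝ)-1)*((n:ℝ)-2) * B^3 * (1-B) :=
      mul_nonneg (mul_nonneg hc (pow_nonneg hB0 3)) h1B
    have : (1-B)^(n+1) = (1-B) * (1-B)^n := by ring
    rw [this]
    push_cast
    nlinarith [h2, key]

lemma mono_c (B : ℝ) (hB0 : 0 ≤ B) (hB1 : B ≤ 1) (m K : ℕ)
    (hm : 1 ≤ m) (hmK : m ≤ K) :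
    1 - ((K:ℝ)-1)*B/2 + ((K:ℝ)-1)*((K:ℝ)-2)*B^2/(2*K)
      ≤ 1 - ((m:ℝ)-1)*B/2 + ((m:ℝ)-1)*((m:ℝ)-2)*B^2/(2*m) := by
  have hm1 : (1:ℝ) ≤ m := by exact_mod_cast hm
  have hmK' : (m:ℝ) ≤ K := by exact_mod_cast hmK
  have hm0 : (0:ℝ) < m := by linarith
  have hK0 : (0:ℝ) < K := by linarith
  rw [← sub_nonneg]
  have hid : (1 - ((m:ℝ)-1)*B/2 + ((m:ℝ)-1)*((m:ℝ)-2)*B^2/(2*m))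
      - (1 - ((K:ℝ)-1)*B/2 + ((K:ℝ)-1)*((K:ℝ)-2)*B^2/(2*K))
      = B*((K:ℝ)-m)*(((K:ℝ)*m)*(1-B)+2*B) / (2*K*m) := by
    field_simp
    ring
  rw [hid]
  have h1 : (0:ℝ) ≤ B*((K:ℝ)-m)*(((K:ℝ)*m)*(1-B)+2*B) := by
    apply mul_nonneg (mul_nonneg hB0 (by linarith))
    nlinarith [mul_nonneg (mul_nonneg hK0.le hm0.le) (sub_nonneg.2 hB1), hB0]
  positivity

lemma lemA (B c : ℝ) (hB0 : 0 ≤ B) (hB1 : B ≤ 1) :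
    ∀ (K j : ℕ) (b : Fin K → ℝ), (∀ k, 0 ≤ b k) → (∀ k, b k ≤ B) →
    (∀ m : ℕ, m ≤ j + K → c * (m * B) ≤ 1 - (1-B)^m) →
    c * (j * B + ∑ k, b k) ≤ 1 - (1-B)^j * ∏ k, (1 - b k) := by
  intro K
  induction K with
  | zero =>
    intro j b _ _ h
    simpa using h j (by omega)
  | succ n ih =>
    intro j b hb0 hbB h
    have hP0 : (0:ℝ) ≤ ∏ k : Fin n, (1 - b k.succ) :=
      Finset.prod_nonneg (fun k _ => by have := hbB k.succ; linarith)
    have hQ0 : (0:ℝ) ≤ (1-B)^j := pow_nonneg (by linarith) j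
    have h0 := ih j (fun k => b k.succ) (fun k => hb0 _) (fun k => hbB _)
      (fun m hm => h m (by omega))
    have hB' := ih (j+1) (fun k => b k.succ) (fun k => hb0 _) (fun k => hbB _)
      (fun m hm => h m (by omega))
    rw [Fin.prod_univ_succ, Fin.sum_univ_succ]
    have hpj : ((1:ℝ)-B)^(j+1) = (1-B)^j * (1-B) := pow_succ _ _
    rw [hpj] at hB'
    push_cast at hB' h0 ⊢
    rcases le_or_gt c ((1-B)^j * ∏ k : Fin n, (1 - b k.succ)) with hcase | hcase
    · nlinarith [mul_nonneg (hb0 0) (sub_nonneg.2 hcase), h0]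
    · nlinarith [mul_nonneg (sub_nonneg.2 (hbB 0)) (sub_pos.2 hcase).le, hB']



/-- For every positive integer `K`, every real `B ∈ [0,1]`, and reals `b 1, …, b K ∈ [0,B]`:
`1 − ∏ (1 − b k) ≥ (1 − (K−1)B/2 + (K−1)(K−2)B²/(2K)) ∑ b k`. -/
theorem stmt_4 (K : ℕ) (hK : 0 < K) (B : ℝ) (hB0 : 0 ≤ B) (hB1 : B ≤ 1)
    (b : Fin K → ℝ) (hb0 : ∀ k, 0 ≤ b k) (hbB : ∀ k, b k ≤ B) :
    (1 - ((K : ℝ) - 1) * B / 2 + ((K : ℝ) - 1) * ((K : ℝ) - 2) * B ^ 2 / (2 * K)) * (∑ k, b k)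
      ≤ 1 - ∏ k, (1 - b k) := by
  obtain ⟨c, hc⟩ : ∃ c : ℝ, c = 1 - ((K : ℝ) - 1) * B / 2 + ((K : ℝ) - 1) * ((K : ℝ) - 2) * B ^ 2 / (2 * K) := ⟨_, rfl⟩
  rw [← hc]
  have hmain : ∀ m : ℕ, m ≤ 0 + K → c * (m * B) ≤ 1 - (1-B)^m := by
    intro m hm
    rcases Nat.eq_zero_or_pos m with rfl | hm1
    · simp
    · have hmK : m ≤ K := by omega
      have hm0 : (0:ℝ) < m := by exact_mod_cast hm1
      have hmono := mono_c B hB0 hB1 m K hm1 hmK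
      have hpow := pow_bound B hB0 hB1 m hm1
      have hcm : (1 - ((m:ℝ)-1)*B/2 + ((m:ℝ)-1)*((m:ℝ)-2)*B^2/(2*m)) * (m * B)
          = m*B - m*((m:ℝ)-1)/2*B^2 + ((m:ℝ)-1)*((m:ℝ)-2)/2*B^3 := by
        field_simp
      have h1 : c * (m * B) ≤ (1 - ((m:ℝ)-1)*B/2 + ((m:ℝ)-1)*((m:ℝ)-2)*B^2/(2*m)) * (m * B) :=
        hc ▸ mul_le_mul_of_nonneg_right hmono (by positivity)
      rw [hcm] at h1
      linarith
  have := lemA B c hB0 hB1 K 0 b hb0 hbB hmain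
  simpa using this
end

section
/- Let A^greedy = (a_1, …, a_K) be any greedy list, i.e., for each k ∈ {1, …, K}, a_k maximizes ⟨Δ(e | {a_1, …, a_{k−1}}), θ⟩ over e ∈ E \ {a_1, …, a_{k−1}}, and let A* be an ordered list of K distinct items of E maximizing f(A, θ) over all such lists. Then f(A^greedy, θ) ≥ (1 − 1/e) · max{1/K, 1 − (K−1)·c_max/2} · f(A*, θ). -/
open Finset

noncomputable def weightedGain {ι : Type*} [DecidableEq ι] {d K : ℕ}
    (c : Finset ι → Fin d → ℝ) (θ : Fin d → ℝ) (A : Fin K → ι) (k : Fin K) : ℝ :=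
  ∑ j, (c (insert (A k) ((Finset.Iio k).image A)) j - c ((Finset.Iio k).image A) j) * θ j

noncomputable def listClickProb {ι : Type*} [DecidableEq ι] {d K : ℕ}
    (c : Finset ι → Fin d → ℝ) (θ : Fin d → ℝ) (A : Fin K → ι) : ℝ :=
  1 - ∏ k : Fin K, (1 - weightedGain c θ A k)

lemma auxW1 {α : Type*} [DecidableEq α] (s : Finset α) (x : α → ℝ)
    (h0 : ∀ i ∈ s, 0 ≤ x i) (h1 : ∀ i ∈ s, x i ≤ 1) :
    1 - ∑ i ∈ s, x i ≤ ∏ i ∈ s, (1 - x i) := by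
  induction s using Finset.induction_on with
  | empty => simp
  | @insert a s ha ih =>
    rw [Finset.prod_insert ha, Finset.sum_insert ha]
    have ih' := ih (fun i hi => h0 i (mem_insert_of_mem hi)) (fun i hi => h1 i (mem_insert_of_mem hi))
    have ha0 : 0 ≤ x a := h0 a (mem_insert_self a s)
    have ha1 : x a ≤ 1 := h1 a (mem_insert_self a s)
    have hs0 : 0 ≤ ∑ i ∈ s, x i := Finset.sum_nonneg fun i hi => h0 i (mem_insert_of_mem hi)
    nlinarith

lemma auxSq {α : Type*} (s : Finset α) (x : α → ℝ) (h0 : ∀ i ∈ s, 0 ≤ x i) :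
    ∑ i ∈ s, (x i)^2 ≤ (∑ i ∈ s, x i)^2 := by
  have hs0 : 0 ≤ ∑ i ∈ s, x i := Finset.sum_nonneg h0
  calc ∑ i ∈ s, (x i)^2 ≤ ∑ i ∈ s, x i * (∑ j ∈ s, x j) := by
        refine Finset.sum_le_sum fun i hi => ?_
        have := Finset.single_le_sum h0 hi
        nlinarith [h0 i hi]
    _ = (∑ i ∈ s, x i)^2 := by rw [← Finset.sum_mul]; ring

lemma auxW2 {α : Type*} [DecidableEq α] (s : Finset α) (x : α → ℝ)
    (h0 : ∀ i ∈ s, 0 ≤ x i) (h1 : ∀ i ∈ s, x i ≤ 1) :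
    ∏ i ∈ s, (1 - x i) ≤
      1 - ∑ i ∈ s, x i + ((∑ i ∈ s, x i)^2 - ∑ i ∈ s, (x i)^2) / 2 := by
  induction s using Finset.induction_on with
  | empty => simp
  | @insert a s ha ih =>
    rw [Finset.prod_insert ha, Finset.sum_insert ha, Finset.sum_insert ha]
    have ih' := ih (fun i hi => h0 i (mem_insert_of_mem hi)) (fun i hi => h1 i (mem_insert_of_mem hi))
    have ha0 : 0 ≤ x a := h0 a (mem_insert_self a s)
    have ha1 : x a ≤ 1 := h1 a (mem_insert_self a s)
    have hE : ∑ i ∈ s, (x i)^2 ≤ (∑ i ∈ s, x i)^2 :=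
      auxSq s x (fun i hi => h0 i (mem_insert_of_mem hi))
    nlinarith

lemma auxIio {K : ℕ} (k : Fin K) :
    Finset.Iio k = Finset.univ.filter (fun i : Fin K => (i : ℕ) < (k : ℕ)) := by
  ext i
  simp only [Finset.mem_Iio, Finset.mem_filter, Finset.mem_univ, true_and, Fin.lt_def]

/-- Approximation ratio of the greedy algorithm:
if `g` is a greedy list (each `g k` maximizes the weighted gain over items outside the prefix)
and `astar` maximizes `f(·, θ)` over ordered lists of `K` distinct items, then
`f(g, θ) ≥ (1 − 1/e) · max {1/K, 1 − (K−1) c_max / 2} · f(astar, θ)`. -/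
theorem stmt_5 {ι : Type*} [Fintype ι] [DecidableEq ι] [Nonempty ι] (d K : ℕ)
    (hd : 0 < d) (hK : 0 < K) (hKE : K ≤ Fintype.card ι)
    (c : Finset ι → Fin d → ℝ)
    (hc0 : ∀ S j, 0 ≤ c S j) (hc1 : ∀ S j, c S j ≤ 1)
    (hmono : ∀ (A B : Finset ι), A ⊆ B → ∀ j, c A j ≤ c B j)
    (hsub : ∀ (A B : Finset ι) (e : ι), A ⊆ B → ∀ j,
      c (insert e B) j - c B j ≤ c (insert e A) j - c A j)
    (hempty : ∀ j, c ∅ j = 0)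
    (θ : Fin d → ℝ) (hθ : ∀ j, 0 ≤ θ j) (hθ1 : ∑ j, θ j ≤ 1)
    (cmax : ℝ)
    (hcmax : cmax = Finset.univ.sup' Finset.univ_nonempty (fun e : ι => ∑ j, c {e} j * θ j))
    (g : Fin K → ι) (hg : Function.Injective g)
    (hgreedy : ∀ (k : Fin K) (e : ι), e ∉ (Finset.Iio k).image g →
      ∑ j, (c (insert e ((Finset.Iio k).image g)) j - c ((Finset.Iio k).image g) j) * θ j ≤
        weightedGain c θ g k)
    (astar : Fin K → ι) (hastar : Function.Injective astar)
    (hopt : ∀ A : Fin K → ι, Function.Injective A →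
      listClickProb c θ A ≤ listClickProb c θ astar) :
    (1 - 1 / Real.exp 1) * max (1 / (K : ℝ)) (1 - ((K : ℝ) - 1) * cmax / 2) *
        listClickProb c θ astar ≤ listClickProb c θ g := by
  -- the weighted coverage set function
  set C : Finset ι → ℝ := fun S => ∑ j, c S j * θ j with hCdef
  have hCmono : ∀ A B : Finset ι, A ⊆ B → C A ≤ C B := by
    intro A B hAB
    exact Finset.sum_le_sum fun j _ => mul_le_mul_of_nonneg_right (hmono A B hAB j) (hθ j)
  have hCempty : C ∅ = 0 := by simp [hCdef, hempty]
  have hC0 : ∀ S, 0 ≤ C S := by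
    intro S; exact Finset.sum_nonneg fun j _ => mul_nonneg (hc0 S j) (hθ j)
  have hC1 : ∀ S, C S ≤ 1 := by
    intro S
    calc C S ≤ ∑ j, θ j := Finset.sum_le_sum fun j _ => by nlinarith [hc0 S j, hc1 S j, hθ j]
      _ ≤ 1 := hθ1
  have hmargsum : ∀ (S : Finset ι) (e : ι),
      ∑ j, (c (insert e S) j - c S j) * θ j = C (insert e S) - C S := by
    intro S e
    simp only [hCdef]
    rw [← Finset.sum_sub_distrib]
    exact Finset.sum_congr rfl fun j _ => by ring
  have hCsub : ∀ (A B : Finset ι) (e : ι), A ⊆ B →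
      C (insert e B) - C B ≤ C (insert e A) - C A := by
    intro A B e hAB
    rw [← hmargsum, ← hmargsum]
    exact Finset.sum_le_sum fun j _ => mul_le_mul_of_nonneg_right (hsub A B e hAB j) (hθ j)
  have hcmax_le : ∀ e : ι, C {e} ≤ cmax := by
    intro e; rw [hcmax]
    exact Finset.le_sup' (fun e : ι => ∑ j, c {e} j * θ j) (mem_univ e)
  have hcmax0 : 0 ≤ cmax := le_trans (hC0 {Classical.arbitrary ι}) (hcmax_le _)
  have hmarg_cmax : ∀ (S : Finset ι) (e : ι), C (insert e S) - C S ≤ cmax := by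
    intro S e
    have h1 := hCsub ∅ S e (Finset.empty_subset S)
    have h2 : C (insert e ∅) = C {e} := by norm_num
    have h3 := hcmax_le e
    rw [h2, hCempty, sub_zero] at h1
    linarith
  -- prefix sets
  set P : (Fin K → ι) → ℕ → Finset ι :=
    fun A n => (Finset.univ.filter fun i : Fin K => (i : ℕ) < n).image A with hPdef
  have hP0 : ∀ A, P A 0 = ∅ := by intro A; simp [hPdef]
  have hPIio : ∀ (A : Fin K → ι) (k : Fin K), (Finset.Iio k).image A = P A k := by
    intro A k
    rw [auxIio k, hPdef]
  have hPsucc : ∀ (A : Fin K → ι) (k : Fin K),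
      insert (A k) (P A (k : ℕ)) = P A ((k : ℕ) + 1) := by
    intro A k
    ext a
    simp only [hPdef, Finset.mem_insert, Finset.mem_image, Finset.mem_filter, Finset.mem_univ,
      true_and]
    constructor
    · rintro (rfl | ⟨i, hi, rfl⟩)
      · exact ⟨k, by omega, rfl⟩
      · exact ⟨i, by omega, rfl⟩
    · rintro ⟨i, hi, rfl⟩
      rcases Nat.lt_succ_iff_lt_or_eq.mp hi with h | h
      · exact Or.inr ⟨i, h, rfl⟩
      · left; congr 1; exact Fin.ext h
  have hgainC : ∀ (A : Fin K → ι) (k : Fin K),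
      weightedGain c θ A k = C (P A ((k : ℕ) + 1)) - C (P A (k : ℕ)) := by
    intro A k
    rw [weightedGain, hPIio, ← hPsucc, hmargsum]
  have hPsub : ∀ (A : Fin K → ι) (k : Fin K), P A (k : ℕ) ⊆ P A ((k : ℕ) + 1) := by
    intro A k; rw [← hPsucc]; exact Finset.subset_insert _ _
  have hgain0 : ∀ (A : Fin K → ι) (k : Fin K), 0 ≤ weightedGain c θ A k := by
    intro A k; rw [hgainC]; have := hCmono _ _ (hPsub A k); linarith
  have hgain_cmax : ∀ (A : Fin K → ι) (k : Fin K), weightedGain c θ A k ≤ cmax := by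
    intro A k; rw [hgainC, ← hPsucc]; exact hmarg_cmax _ _
  have hgain1 : ∀ (A : Fin K → ι) (k : Fin K), weightedGain c θ A k ≤ 1 := by
    intro A k
    rw [hgainC]
    have h1 := hC1 (P A ((k : ℕ) + 1))
    have h0 := hC0 (P A (k : ℕ))
    linarith
  have hfac0 : ∀ (A : Fin K → ι) (k : Fin K), 0 ≤ 1 - weightedGain c θ A k := by
    intro A k; linarith [hgain1 A k]
  have hfac1 : ∀ (A : Fin K → ι) (k : Fin K), 1 - weightedGain c θ A k ≤ 1 := by
    intro A k; linarith [hgain0 A k]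
  -- telescoping
  have htel : ∀ A : Fin K → ι, ∑ k : Fin K, weightedGain c θ A k = C (P A K) := by
    intro A
    have h : ∑ k : Fin K, weightedGain c θ A k
        = ∑ n ∈ Finset.range K, (C (P A (n + 1)) - C (P A n)) := by
      rw [← Fin.sum_univ_eq_sum_range (fun n => C (P A (n + 1)) - C (P A n)) K]
      exact Finset.sum_congr rfl fun k _ => hgainC A k
    rw [h, Finset.sum_range_sub (fun n => C (P A n)), hP0, hCempty, sub_zero]
  -- basic bounds on listClickProb
  have hf_le : ∀ A : Fin K → ι, listClickProb c θ A ≤ ∑ k : Fin K, weightedGain c θ A k := by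
    intro A
    have h := auxW1 Finset.univ (fun k => weightedGain c θ A k)
      (fun k _ => hgain0 A k) (fun k _ => hgain1 A k)
    rw [listClickProb]; linarith
  have hf0 : ∀ A : Fin K → ι, 0 ≤ listClickProb c θ A := by
    intro A
    have h := Finset.prod_le_one (s := (Finset.univ : Finset (Fin K)))
      (f := fun k => 1 - weightedGain c θ A k)
      (fun k _ => hfac0 A k) (fun k _ => hfac1 A k)
    rw [listClickProb]; linarith
  -- the greedy first pick achieves cmax, so f(g) ≥ cmax
  have hPg0 : (Finset.Iio (⟨0, hK⟩ : Fin K)).image g = ∅ := by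
    ext a
    simp [Finset.mem_Iio, Fin.lt_def]
  have hfg_cmax : cmax ≤ listClickProb c θ g := by
    have hx0 : cmax ≤ weightedGain c θ g ⟨0, hK⟩ := by
      rw [hcmax]
      apply Finset.sup'_le
      intro e _
      have he : e ∉ (Finset.Iio (⟨0, hK⟩ : Fin K)).image g := by
        rw [hPg0]; exact Finset.notMem_empty e
      have h := hgreedy ⟨0, hK⟩ e he
      rw [hPg0] at h
      simp only [hempty, sub_zero] at h
      have h2 : insert e (∅ : Finset ι) = {e} := rfl
      rw [h2] at h
      exact h
    have hprod : ∏ k : Fin K, (1 - weightedGain c θ g k)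
        ≤ 1 - weightedGain c θ g ⟨0, hK⟩ := by
      have h1 : ∏ k ∈ Finset.univ.erase (⟨0, hK⟩ : Fin K), (1 - weightedGain c θ g k) ≤ 1 :=
        Finset.prod_le_one (fun k _ => hfac0 g k) (fun k _ => hfac1 g k)
      calc ∏ k : Fin K, (1 - weightedGain c θ g k)
          = (1 - weightedGain c θ g ⟨0, hK⟩) *
            ∏ k ∈ Finset.univ.erase (⟨0, hK⟩ : Fin K), (1 - weightedGain c θ g k) :=
            (Finset.mul_prod_erase Finset.univ _ (Finset.mem_univ (⟨0, hK⟩ : Fin K))).symm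
        _ ≤ (1 - weightedGain c θ g ⟨0, hK⟩) * 1 :=
            mul_le_mul_of_nonneg_left h1 (hfac0 g ⟨0, hK⟩)
        _ = 1 - weightedGain c θ g ⟨0, hK⟩ := mul_one _
    rw [listClickProb]
    linarith
  -- marginal-sum bound
  have hunion : ∀ (T S : Finset ι), C (S ∪ T) ≤ C S + ∑ e ∈ T, (C (insert e S) - C S) := by
    intro T
    induction T using Finset.induction_on with
    | empty => intro S; simp
    | @insert a T ha ih =>
      intro S
      have h1 : S ∪ insert a T = insert a (S ∪ T) := by
        rw [Finset.union_insert]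
      have h2 := hCsub S (S ∪ T) a Finset.subset_union_left
      rw [h1, Finset.sum_insert ha]
      have h3 := ih S
      linarith
  -- Nemhauser induction
  set OPT : ℝ := C (P astar K) with hOPTdef
  have hOPT0 : 0 ≤ OPT := hC0 _
  have hcardP : ∀ (A : Fin K → ι) (n : ℕ), (P A n).card ≤ K := by
    intro A n
    calc (P A n).card ≤ (Finset.univ.filter fun i : Fin K => (i : ℕ) < n).card :=
          Finset.card_image_le
      _ ≤ (Finset.univ : Finset (Fin K)).card := Finset.card_filter_le _ _
      _ = K := by simp
  have hstep : ∀ n (hn : n < K),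
      OPT ≤ C (P g n) + K * weightedGain c θ g ⟨n, hn⟩ := by
    intro n hn
    have h1 : OPT ≤ C (P g n ∪ P astar K) := hCmono _ _ Finset.subset_union_right
    have h2 := hunion (P astar K) (P g n)
    have h3 : ∀ e ∈ P astar K, C (insert e (P g n)) - C (P g n) ≤ weightedGain c θ g ⟨n, hn⟩ := by
      intro e _
      by_cases he : e ∈ P g n
      · rw [Finset.insert_eq_self.mpr he, sub_self]
        exact hgain0 g ⟨n, hn⟩
      · have he' : e ∉ (Finset.Iio (⟨n, hn⟩ : Fin K)).image g := by
          rw [hPIio]; exact he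
        have h := hgreedy ⟨n, hn⟩ e he'
        rw [hPIio, hmargsum] at h
        exact h
    have h4 : ∑ e ∈ P astar K, (C (insert e (P g n)) - C (P g n))
        ≤ (P astar K).card * weightedGain c θ g ⟨n, hn⟩ := by
      calc ∑ e ∈ P astar K, (C (insert e (P g n)) - C (P g n))
          ≤ ∑ _e ∈ P astar K, weightedGain c θ g ⟨n, hn⟩ := Finset.sum_le_sum h3
        _ = (P astar K).card * weightedGain c θ g ⟨n, hn⟩ := by
            rw [Finset.sum_const, nsmul_eq_mul]
    have h5 : ((P astar K).card : ℝ) * weightedGain c θ g ⟨n, hn⟩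
        ≤ K * weightedGain c θ g ⟨n, hn⟩ := by
      apply mul_le_mul_of_nonneg_right _ (hgain0 g ⟨n, hn⟩)
      exact_mod_cast hcardP astar K
    linarith
  have hKpos : (0 : ℝ) < K := by exact_mod_cast hK
  have hKne : (K : ℝ) ≠ 0 := ne_of_gt hKpos
  have hrat : (0:ℝ) ≤ 1 - 1 / K := by
    rw [sub_nonneg, div_le_one hKpos]; exact_mod_cast hK
  have hind : ∀ n, n ≤ K → OPT - C (P g n) ≤ (1 - 1 / K)^n * OPT := by
    intro n
    induction n with
    | zero => intro _; rw [hP0, hCempty]; simp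
    | succ n ih =>
      intro hn1
      have hn : n < K := hn1
      have ih' := ih (le_of_lt hn)
      have hstep' := hstep n hn
      have hPn : C (P g (n + 1)) = C (P g n) + weightedGain c θ g ⟨n, hn⟩ := by
        have h := hgainC g ⟨n, hn⟩
        simp only [Fin.val_mk] at h
        linarith
      have hpow : (0:ℝ) ≤ (1 - 1 / K)^n := pow_nonneg hrat n
      have key : OPT - C (P g (n+1)) ≤ (OPT - C (P g n)) * (1 - 1 / K) := by
        rw [hPn]
        have hdiv : (OPT - C (P g n)) / K ≤ weightedGain c θ g ⟨n, hn⟩ := by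
          rw [div_le_iff₀ hKpos]
          nlinarith
        have hexpand : (OPT - C (P g n)) * (1 - 1 / K)
            = (OPT - C (P g n)) - (OPT - C (P g n)) / K := by
          field_simp
        rw [hexpand]
        linarith
      calc OPT - C (P g (n+1)) ≤ (OPT - C (P g n)) * (1 - 1 / K) := key
        _ ≤ (1 - 1 / K)^n * OPT * (1 - 1 / K) := mul_le_mul_of_nonneg_right ih' hrat
        _ = (1 - 1 / K)^(n+1) * OPT := by ring
  have hexp : (1 - 1 / (K:ℝ))^K ≤ 1 / Real.exp 1 := by
    have h1 : 1 - 1 / (K:ℝ) ≤ Real.exp (-(1 / K)) := by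
      have h := Real.add_one_le_exp (-(1 / (K:ℝ)))
      linarith
    have h2 : (1 - 1 / (K:ℝ))^K ≤ Real.exp (-(1 / K))^K :=
      pow_le_pow_left₀ hrat h1 K
    have h3 : Real.exp (-(1 / (K:ℝ)))^K = Real.exp (-1) := by
      rw [← Real.exp_nat_mul]
      congr 1
      field_simp
    rw [h3, Real.exp_neg] at h2
    calc (1 - 1 / (K:ℝ))^K ≤ (Real.exp 1)⁻¹ := h2
      _ = 1 / Real.exp 1 := (one_div _).symm
  have hgreedyC : (1 - 1 / Real.exp 1) * OPT ≤ C (P g K) := by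
    have h1 := hind K le_rfl
    have h2 : (1 - 1 / (K:ℝ))^K * OPT ≤ (1 / Real.exp 1) * OPT :=
      mul_le_mul_of_nonneg_right hexp hOPT0
    nlinarith
  -- f(astar) ≤ OPT
  have hfstar_OPT : listClickProb c θ astar ≤ OPT := by
    have h := hf_le astar
    rw [htel astar] at h
    exact h
  -- f(astar) ≤ K * cmax
  have hfstar_Kcmax : listClickProb c θ astar ≤ K * cmax := by
    have h1 := hf_le astar
    have h2 : ∑ k : Fin K, weightedGain c θ astar k ≤ ∑ _k : Fin K, cmax :=
      Finset.sum_le_sum fun k _ => hgain_cmax astar k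
    rw [Finset.sum_const, nsmul_eq_mul] at h2
    simp only [Finset.card_univ, Fintype.card_fin] at h2
    linarith
  -- f(g) ≥ C(P g K) * (1 - (K-1) cmax / 2)
  set Cg : ℝ := C (P g K) with hCgdef
  have hCg0 : 0 ≤ Cg := hC0 _
  have hfg_lower : Cg * (1 - ((K:ℝ) - 1) * cmax / 2) ≤ listClickProb c θ g := by
    have hW2 := auxW2 Finset.univ (fun k => weightedGain c θ g k)
      (fun k _ => hgain0 g k) (fun k _ => hgain1 g k)
    have hsum : ∑ k : Fin K, weightedGain c θ g k = Cg := htel g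
    have hpair : (∑ k : Fin K, weightedGain c θ g k)^2 - ∑ k : Fin K, (weightedGain c θ g k)^2
        ≤ ((K:ℝ) - 1) * cmax * ∑ k : Fin K, weightedGain c θ g k := by
      have h1 : ∑ k : Fin K, weightedGain c θ g k *
            ((∑ i : Fin K, weightedGain c θ g i) - weightedGain c θ g k)
          = (∑ k : Fin K, weightedGain c θ g k)^2 - ∑ k : Fin K, (weightedGain c θ g k)^2 := by
        simp only [mul_sub]
        rw [Finset.sum_sub_distrib, ← Finset.sum_mul]
        have h1' : ∑ k : Fin K, weightedGain c θ g k * weightedGain c θ g k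
            = ∑ k : Fin K, (weightedGain c θ g k)^2 :=
          Finset.sum_congr rfl fun k _ => (sq (weightedGain c θ g k)) ▸ by ring
        rw [h1']
        ring
      rw [← h1]
      have h2 : ∀ k : Fin K, (∑ i : Fin K, weightedGain c θ g i) - weightedGain c θ g k
          ≤ ((K:ℝ) - 1) * cmax := by
        intro k
        have herase : (∑ i : Fin K, weightedGain c θ g i) - weightedGain c θ g k
            = ∑ i ∈ Finset.univ.erase k, weightedGain c θ g i := by
          rw [← Finset.add_sum_erase Finset.univ _ (Finset.mem_univ k)]
          ring
        rw [herase]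
        have h3 := Finset.sum_le_card_nsmul (Finset.univ.erase k)
          (fun i => weightedGain c θ g i) cmax (fun i _ => hgain_cmax g i)
        rw [nsmul_eq_mul] at h3
        have hcard : (((Finset.univ.erase k) : Finset (Fin K)).card : ℝ) = (K:ℝ) - 1 := by
          rw [Finset.card_erase_of_mem (Finset.mem_univ k)]
          simp only [Finset.card_univ, Fintype.card_fin]
          have h4 : 1 ≤ K := hK
          push_cast [Nat.cast_sub h4]
          ring
        rw [hcard] at h3
        exact h3
      calc ∑ k : Fin K, weightedGain c θ g k *
            ((∑ i : Fin K, weightedGain c θ g i) - weightedGain c θ g k)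
          ≤ ∑ k : Fin K, weightedGain c θ g k * (((K:ℝ) - 1) * cmax) :=
            Finset.sum_le_sum fun k _ => mul_le_mul_of_nonneg_left (h2 k) (hgain0 g k)
        _ = ((K:ℝ) - 1) * cmax * ∑ k : Fin K, weightedGain c θ g k := by
            rw [← Finset.sum_mul]; ring
    rw [hsum] at hW2 hpair
    have hA : Cg * (1 - ((K:ℝ) - 1) * cmax / 2) = Cg - ((K:ℝ) - 1) * cmax * Cg / 2 := by ring
    rw [listClickProb, hA]
    linarith
  -- scalar facts about 1 - 1/e
  have hexp1 : (1:ℝ) ≤ Real.exp 1 := by nlinarith [Real.add_one_le_exp (1:ℝ)]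
  have hepos : (0:ℝ) < Real.exp 1 := Real.exp_pos 1
  have heinv1 : 1 / Real.exp 1 ≤ 1 := by
    rw [div_le_one hepos]; exact hexp1
  have heinv0 : 0 < 1 / Real.exp 1 := by positivity
  have hfacnn : (0:ℝ) ≤ 1 - 1 / Real.exp 1 := by linarith
  have hfacle : 1 - 1 / Real.exp 1 ≤ 1 := by linarith
  -- branch 1
  have T1 : (1 - 1 / Real.exp 1) * (1 / (K:ℝ)) * listClickProb c θ astar
      ≤ listClickProb c θ g := by
    have hfs0 := hf0 astar
    have hKinv0 : (0:ℝ) ≤ 1 / (K:ℝ) := by positivity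
    have h1 : (1 - 1 / Real.exp 1) * (1 / (K:ℝ)) * listClickProb c θ astar
        ≤ 1 * ((1 / (K:ℝ)) * listClickProb c θ astar) := by
      have hbase : 0 ≤ (1 / (K:ℝ)) * listClickProb c θ astar := mul_nonneg hKinv0 hfs0
      calc (1 - 1 / Real.exp 1) * (1 / (K:ℝ)) * listClickProb c θ astar
          = (1 - 1 / Real.exp 1) * ((1 / (K:ℝ)) * listClickProb c θ astar) := by ring
        _ ≤ 1 * ((1 / (K:ℝ)) * listClickProb c θ astar) :=
            mul_le_mul_of_nonneg_right hfacle hbase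
    have h2 : (1 / (K:ℝ)) * listClickProb c θ astar ≤ (1 / (K:ℝ)) * (K * cmax) :=
      mul_le_mul_of_nonneg_left hfstar_Kcmax hKinv0
    have h3 : (1 / (K:ℝ)) * (K * cmax) = cmax := by field_simp
    rw [one_mul] at h1
    linarith
  -- branch 2
  have T2 : (1 - 1 / Real.exp 1) * (1 - ((K:ℝ) - 1) * cmax / 2) * listClickProb c θ astar
      ≤ listClickProb c θ g := by
    rcases le_or_gt (1 - ((K:ℝ) - 1) * cmax / 2) 0 with hb | hb
    · have hfs0 := hf0 astar
      have hx : 0 ≤ (1 - 1 / Real.exp 1) * listClickProb c θ astar :=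
        mul_nonneg hfacnn hfs0
      have heq : (1 - 1 / Real.exp 1) * (1 - ((K:ℝ) - 1) * cmax / 2) * listClickProb c θ astar
          = (1 - ((K:ℝ) - 1) * cmax / 2) * ((1 - 1 / Real.exp 1) * listClickProb c θ astar) := by
        ring
      have hle0 : (1 - ((K:ℝ) - 1) * cmax / 2) *
          ((1 - 1 / Real.exp 1) * listClickProb c θ astar) ≤ 0 :=
        mul_nonpos_of_nonpos_of_nonneg hb hx
      rw [heq]
      linarith [hf0 g]
    · have hb' : 0 ≤ 1 - ((K:ℝ) - 1) * cmax / 2 := le_of_lt hb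
      have h1 : (1 - 1 / Real.exp 1) * (1 - ((K:ℝ) - 1) * cmax / 2) * listClickProb c θ astar
          ≤ (1 - 1 / Real.exp 1) * (1 - ((K:ℝ) - 1) * cmax / 2) * OPT :=
        mul_le_mul_of_nonneg_left hfstar_OPT (mul_nonneg hfacnn hb')
      have h2 : (1 - ((K:ℝ) - 1) * cmax / 2) * ((1 - 1 / Real.exp 1) * OPT)
          ≤ (1 - ((K:ℝ) - 1) * cmax / 2) * Cg :=
        mul_le_mul_of_nonneg_left hgreedyC hb'
      have heq1 : (1 - 1 / Real.exp 1) * (1 - ((K:ℝ) - 1) * cmax / 2) * OPT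
          = (1 - ((K:ℝ) - 1) * cmax / 2) * ((1 - 1 / Real.exp 1) * OPT) := by ring
      have heq2 : (1 - ((K:ℝ) - 1) * cmax / 2) * Cg = Cg * (1 - ((K:ℝ) - 1) * cmax / 2) := by
        ring
      rw [heq1] at h1
      rw [heq2] at h2
      linarith [hfg_lower]
  rcases le_total (1 / (K:ℝ)) (1 - ((K:ℝ) - 1) * cmax / 2) with h | h
  · rw [max_eq_right h]; exact T2
  · rw [max_eq_left h]; exact T1
end

section
/- For every ordered list A = (a_1, …, a_K) of K distinct items of E, one has max{1/K, 1 − (K−1)·c_max/2} · Σ_{k=1}^K ⟨Δ(a_k | {a_1, …, a_{k−1}}), θ⟩ ≤ f(A, θ) ≤ Σ_{k=1}^K ⟨Δ(a_k | {a_1, …, a_{k−1}}), θ⟩. -/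
open Finset

/-- Weierstrass product inequality. -/
lemma aux_weier {α : Type*} (s : Finset α) (g : α → ℝ)
    (h0 : ∀ i ∈ s, 0 ≤ g i) (h1 : ∀ i ∈ s, g i ≤ 1) :
    1 - ∑ i ∈ s, g i ≤ ∏ i ∈ s, (1 - g i) := by
  induction s using Finset.cons_induction with
  | empty => simp
  | cons a s ha ih =>
    rw [Finset.prod_cons, Finset.sum_cons]
    have hP : 1 - ∑ i ∈ s, g i ≤ ∏ i ∈ s, (1 - g i) :=
      ih (fun i hi => h0 i (Finset.mem_cons_of_mem hi))
        (fun i hi => h1 i (Finset.mem_cons_of_mem hi))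
    have ha0 : 0 ≤ g a := h0 a (Finset.mem_cons_self a s)
    have ha1 : g a ≤ 1 := h1 a (Finset.mem_cons_self a s)
    have hS : 0 ≤ ∑ i ∈ s, g i :=
      Finset.sum_nonneg fun i hi => h0 i (Finset.mem_cons_of_mem hi)
    nlinarith [mul_le_mul_of_nonneg_left hP (by linarith : (0:ℝ) ≤ 1 - g a)]

/-- Second-order Bonferroni-type upper bound on the product. -/
lemma aux_bonf {α : Type*} (s : Finset α) (g : α → ℝ)
    (h0 : ∀ i ∈ s, 0 ≤ g i) (h1 : ∀ i ∈ s, g i ≤ 1) :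
    ∏ i ∈ s, (1 - g i) ≤
      1 - (∑ i ∈ s, g i) + ((∑ i ∈ s, g i) ^ 2 - ∑ i ∈ s, (g i) ^ 2) / 2 := by
  induction s using Finset.cons_induction with
  | empty => simp
  | cons a s ha ih =>
    rw [Finset.prod_cons, Finset.sum_cons, Finset.sum_cons]
    have h0' : ∀ i ∈ s, 0 ≤ g i := fun i hi => h0 i (Finset.mem_cons_of_mem hi)
    have h1' : ∀ i ∈ s, g i ≤ 1 := fun i hi => h1 i (Finset.mem_cons_of_mem hi)
    have hP := ih h0' h1'
    have ha0 : 0 ≤ g a := h0 a (Finset.mem_cons_self a s)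
    have ha1 : g a ≤ 1 := h1 a (Finset.mem_cons_self a s)
    have hQ2 : ∑ i ∈ s, (g i) ^ 2 ≤ (∑ i ∈ s, g i) ^ 2 :=
      Finset.sum_sq_le_sq_sum_of_nonneg h0'
    nlinarith [mul_le_mul_of_nonneg_left hP (by linarith : (0:ℝ) ≤ 1 - g a)]

/-- For every ordered list `A` of `K` distinct items,
`max {1/K, 1 − (K−1) c_max / 2} · ∑_k ⟨Δ(a_k | ·), θ⟩ ≤ f(A, θ) ≤ ∑_k ⟨Δ(a_k | ·), θ⟩`. -/
theorem stmt_6 {ι : Type*} [Fintype ι] [DecidableEq ι] [Nonempty ι] (d K : ℕ)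
    (hd : 0 < d) (hK : 0 < K) (hKE : K ≤ Fintype.card ι)
    (c : Finset ι → Fin d → ℝ)
    (hc0 : ∀ S j, 0 ≤ c S j) (hc1 : ∀ S j, c S j ≤ 1)
    (hmono : ∀ (A B : Finset ι), A ⊆ B → ∀ j, c A j ≤ c B j)
    (hsub : ∀ (A B : Finset ι) (e : ι), A ⊆ B → ∀ j,
      c (insert e B) j - c B j ≤ c (insert e A) j - c A j)
    (hempty : ∀ j, c ∅ j = 0)
    (θ : Fin d → ℝ) (hθ : ∀ j, 0 ≤ θ j) (hθ1 : ∑ j, θ j ≤ 1)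
    (cmax : ℝ)
    (hcmax : cmax = Finset.univ.sup' Finset.univ_nonempty (fun e : ι => ∑ j, c {e} j * θ j))
    (A : Fin K → ι) (hA : Function.Injective A) :
    max (1 / (K : ℝ)) (1 - ((K : ℝ) - 1) * cmax / 2) * (∑ k, weightedGain c θ A k)
        ≤ listClickProb c θ A ∧
      listClickProb c θ A ≤ ∑ k, weightedGain c θ A k := by
  haveI : Nonempty (Fin K) := ⟨⟨0, hK⟩⟩
  set g : Fin K → ℝ := weightedGain c θ A with hg
  -- basic bounds on g
  have hsingle : ∀ k : Fin K, g k ≤ ∑ j, c {A k} j * θ j := by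
    intro k
    apply Finset.sum_le_sum
    intro j _
    have := hsub ∅ ((Finset.Iio k).image A) (A k) (Finset.empty_subset _) j
    rw [show insert (A k) (∅ : Finset ι) = {A k} from rfl, hempty] at this
    have hθj := hθ j
    nlinarith
  have hg0 : ∀ k, 0 ≤ g k := by
    intro k
    apply Finset.sum_nonneg
    intro j _
    have hm := hmono ((Finset.Iio k).image A) (insert (A k) ((Finset.Iio k).image A))
      (Finset.subset_insert _ _) j
    exact mul_nonneg (by linarith) (hθ j)
  have hcmaxk : ∀ k, g k ≤ cmax := by
    intro k
    refine (hsingle k).trans ?_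
    rw [hcmax]
    exact Finset.le_sup' (fun e : ι => ∑ j, c {e} j * θ j) (Finset.mem_univ (A k))
  have hg1 : ∀ k, g k ≤ 1 := by
    intro k
    refine (hsingle k).trans (le_trans ?_ hθ1)
    apply Finset.sum_le_sum
    intro j _
    nlinarith [hc1 {A k} j, hc0 {A k} j, hθ j]
  have hcmax0 : 0 ≤ cmax := le_trans (hg0 ⟨0, hK⟩) (hcmaxk ⟨0, hK⟩)
  have hS0 : 0 ≤ ∑ k, g k := Finset.sum_nonneg fun k _ => hg0 k
  have hprod_le_one : ∏ k, (1 - g k) ≤ 1 :=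
    Finset.prod_le_one (fun k _ => by linarith [hg1 k]) (fun k _ => by linarith [hg0 k])
  have hUB : listClickProb c θ A ≤ ∑ k, weightedGain c θ A k := by
    have := aux_weier Finset.univ g (fun k _ => hg0 k) (fun k _ => hg1 k)
    unfold listClickProb
    rw [← hg]
    linarith
  refine ⟨?_, hUB⟩
  have hSmul : max (1 / (K : ℝ)) (1 - ((K : ℝ) - 1) * cmax / 2) * (∑ k, g k) =
      max ((1 / (K : ℝ)) * ∑ k, g k) ((1 - ((K : ℝ) - 1) * cmax / 2) * ∑ k, g k) :=
    max_mul_of_nonneg _ _ hS0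
  rw [hSmul]
  apply max_le
  · -- 1/K bound
    obtain ⟨m, _, hm⟩ := Finset.exists_mem_eq_sup' (Finset.univ_nonempty (α := Fin K)) g
    have hmax : ∀ k, g k ≤ g m := by
      intro k
      rw [← hm]
      exact Finset.le_sup' _ (Finset.mem_univ k)
    have hSK : ∑ k, g k ≤ K * g m := by
      calc ∑ k, g k ≤ ∑ _k : Fin K, g m := Finset.sum_le_sum fun k _ => hmax k
      _ = K * g m := by simp [mul_comm]
    have hgm : g m ≤ listClickProb c θ A := by
      unfold listClickProb
      rw [← hg, ← Finset.mul_prod_erase Finset.univ _ (Finset.mem_univ m)]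
      have h1 : ∏ k ∈ Finset.univ.erase m, (1 - g k) ≤ 1 :=
        Finset.prod_le_one (fun k _ => by linarith [hg1 k]) (fun k _ => by linarith [hg0 k])
      nlinarith [hg0 m, hg1 m]
    have hKpos : (0:ℝ) < K := by exact_mod_cast hK
    rw [div_mul_eq_mul_div, one_mul, div_le_iff₀ hKpos]
    calc (∑ k, g k) ≤ K * g m := hSK
    _ ≤ listClickProb c θ A * K := by nlinarith
  · -- Bonferroni bound
    have hbonf := aux_bonf Finset.univ g (fun k _ => hg0 k) (fun k _ => hg1 k)
    have hSerase : ∀ k : Fin K, (∑ i, g i) - g k ≤ ((K : ℝ) - 1) * cmax := by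
      intro k
      have h1 : (∑ i, g i) - g k = ∑ i ∈ Finset.univ.erase k, g i := by
        rw [← Finset.add_sum_erase Finset.univ g (Finset.mem_univ k)]; ring
      have h2 : ∑ i ∈ Finset.univ.erase k, g i
          ≤ (Finset.univ.erase k).card • cmax :=
        Finset.sum_le_card_nsmul _ _ _ (fun i _ => hcmaxk i)
      rw [h1]
      have h3 : (Finset.univ.erase k).card = K - 1 := by
        rw [Finset.card_erase_of_mem (Finset.mem_univ k), Finset.card_univ, Fintype.card_fin]
      rw [h3, nsmul_eq_mul] at h2
      refine h2.trans ?_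
      have hc : ((K - 1 : ℕ) : ℝ) = (K : ℝ) - 1 := by
        rw [Nat.cast_sub hK, Nat.cast_one]
      rw [hc]
    have hQ : (∑ k, g k) ^ 2 - ∑ k, (g k) ^ 2 ≤ ((K : ℝ) - 1) * cmax * ∑ k, g k := by
      have hexp : (∑ k, g k) ^ 2 - ∑ k, (g k) ^ 2
          = ∑ k, g k * ((∑ i, g i) - g k) := by
        simp only [mul_sub, Finset.sum_sub_distrib, ← Finset.sum_mul, sq]
      rw [hexp]
      calc ∑ k, g k * ((∑ i, g i) - g k)
          ≤ ∑ k, g k * (((K : ℝ) - 1) * cmax) :=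
            Finset.sum_le_sum fun k _ =>
              mul_le_mul_of_nonneg_left (hSerase k) (hg0 k)
        _ = ((K : ℝ) - 1) * cmax * ∑ k, g k := by
            rw [← Finset.sum_mul]; ring
    unfold listClickProb
    rw [← hg]
    linarith
end

section
/- Let E be a finite set, K a positive integer with K ≤ |E|, and g a real-valued function on finite subsets of E that is monotone (g(A) ≤ g(B) whenever A ⊆ B), submodular (g(A ∪ {e}) − g(A) ≥ g(B ∪ {e}) − g(B) whenever A ⊆ B and e ∈ E), and satisfies g(∅) = 0. Let a_1, …, a_K be chosen greedily, i.e., for each k, a_k ∈ E \ {a_1, …, a_{k−1}} maximizes g({a_1, …, a_{k−1}} ∪ {e}) − g({a_1, …, a_{k−1}}) over e ∈ E \ {a_1, …, a_{k−1}}. Then g({a_1, …, a_K}) ≥ (1 − 1/e) · max{g(S) : S ⊆ E, |S| = K}. -/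
/-!
Let `T` be an optimal `K`-set and `S` the current greedy set. By monotonicity and submodularity
`g T - g S ≤ g (S ∪ T) - g S ≤ ∑ e ∈ T, marginal g S e`, and each summand is at most the greedy
gain, so one greedy step shrinks the gap `g T - g S` by the factor `1 - 1/K`. After `K`
steps the gap is at most `(1 - 1/K)^K g T ≤ g T / e`.
-/

open Finset

section Marginal

variable {ι : Type*} [DecidableEq ι]

def marginal (g : Finset ι → ℝ) (A : Finset ι) (e : ι) : ℝ := g (insert e A) - g A

def IsSubmodular (g : Finset ι → ℝ) : Prop :=
  ∀ (A B : Finset ι) (e : ι), A ⊆ B → marginal g B e ≤ marginal g A e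

variable {g : Finset ι → ℝ}

lemma marginal_nonneg (hmono : Monotone g) (A : Finset ι) (e : ι) :
    0 ≤ marginal g A e :=
  sub_nonneg.mpr (hmono (subset_insert e A))

lemma marginal_of_mem {A : Finset ι} {e : ι} (he : e ∈ A) : marginal g A e = 0 := by
  rw [marginal, insert_eq_of_mem he, sub_self]

lemma marginal_le_of_forall_notMem (hmono : Monotone g)
    {S : Finset ι} {x : ι} (h : ∀ e ∉ S, marginal g S e ≤ marginal g S x) (e : ι) :
    marginal g S e ≤ marginal g S x := by
  by_cases he : e ∈ S
  · rw [marginal_of_mem he]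
    exact marginal_nonneg hmono S x
  · exact h e he

lemma sub_le_sum_marginal (hsub : IsSubmodular g) (S T : Finset ι) :
    g (S ∪ T) - g S ≤ ∑ e ∈ T, marginal g S e := by
  induction T using Finset.induction with
  | empty => simp
  | @insert t T ht ih =>
    have hstep := hsub S (S ∪ T) t subset_union_left
    rw [union_insert, sum_insert ht]
    simp only [marginal] at hstep ih ⊢
    linarith

lemma sub_le_card_mul_of_marginal_le (hmono : Monotone g) (hsub : IsSubmodular g)
    {S T : Finset ι} {δ : ℝ} (hδ : ∀ e, marginal g S e ≤ δ) : g T - g S ≤ #T * δ :=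
  calc g T - g S ≤ g (S ∪ T) - g S := by linarith [hmono (subset_union_right : T ⊆ S ∪ T)]
    _ ≤ ∑ e ∈ T, marginal g S e := sub_le_sum_marginal hsub S T
    _ ≤ ∑ _e ∈ T, δ := sum_le_sum fun e _ => hδ e
    _ = #T * δ := by rw [sum_const, nsmul_eq_mul]

lemma sub_insert_le_of_marginal_le (hmono : Monotone g) (hsub : IsSubmodular g)
    {S T : Finset ι} {x : ι} (hx : ∀ e, marginal g S e ≤ marginal g S x) (hT : T.Nonempty) :
    g T - g (insert x S) ≤ (1 - 1 / #T) * (g T - g S) := by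
  have hgap := sub_le_card_mul_of_marginal_le hmono hsub (T := T) hx
  have hfrac : (g T - g S) / #T ≤ marginal g S x := by
    rw [div_le_iff₀ (by exact_mod_cast hT.card_pos)]
    linarith
  rw [marginal] at hfrac
  linarith [show (1 - 1 / (#T : ℝ)) * (g T - g S) = g T - g S - (g T - g S) / #T by ring]

end Marginal

section Prefix

variable {ι : Type*} [DecidableEq ι] {K : ℕ}

def prefixImage (a : Fin K → ι) (n : ℕ) : Finset ι :=
  (univ.filter fun i : Fin K => (i : ℕ) < n).image a

@[simp] lemma prefixImage_zero (a : Fin K → ι) : prefixImage a 0 = ∅ := by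
  simp [prefixImage]

lemma prefixImage_self (a : Fin K → ι) : prefixImage a K = univ.image a := by
  simp [prefixImage]

lemma prefixImage_val (a : Fin K → ι) (k : Fin K) : prefixImage a k = (Iio k).image a := by
  rw [prefixImage]; congr 1; ext i; simp

lemma prefixImage_succ (a : Fin K → ι) (k : Fin K) :
    prefixImage a (k + 1) = insert (a k) (prefixImage a k) := by
  rw [prefixImage, prefixImage, ← image_insert]
  congr 1; ext i; simp [Fin.ext_iff, le_iff_eq_or_lt]

end Prefix

/-- Classical `1 − 1/e` guarantee for greedy maximization of a monotone submodular
set function `g` with `g ∅ = 0` under a cardinality constraint `K`: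
if `a 1, …, a K` are chosen greedily (each `a k` maximizes the marginal gain over the
prefix `{a 1, …, a (k−1)}` among items outside the prefix), then
`g {a 1, …, a K} ≥ (1 − 1/e) · max {g S : S ⊆ E, |S| = K}`. -/
theorem stmt_11 {ι : Type*} [Fintype ι] [DecidableEq ι]
    (K : ℕ) (hK : 0 < K) (hKE : K ≤ Fintype.card ι)
    (g : Finset ι → ℝ)
    (hmono : ∀ A B : Finset ι, A ⊆ B → g A ≤ g B)
    (hsub : ∀ (A B : Finset ι) (e : ι), A ⊆ B →
      g (insert e B) - g B ≤ g (insert e A) - g A)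
    (hempty : g ∅ = 0)
    (a : Fin K → ι)
    (hgreedy : ∀ (k : Fin K) (e : ι), e ∉ (Finset.Iio k).image a →
      g (insert e ((Finset.Iio k).image a)) - g ((Finset.Iio k).image a) ≤
        g (insert (a k) ((Finset.Iio k).image a)) - g ((Finset.Iio k).image a)) :
    (1 - 1 / Real.exp 1) *
        ((Finset.univ.powersetCard K).sup'
          (Finset.powersetCard_nonempty.mpr (by simpa using hKE)) g)
      ≤ g (Finset.univ.image a) := by
  obtain ⟨T, hT, hOPT⟩ := exists_mem_eq_sup'
    (powersetCard_nonempty.mpr (by simpa using hKE) : (univ.powersetCard K).Nonempty) g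
  rw [hOPT]
  have hTcard : #T = K := (mem_powersetCard.mp hT).2
  have hmono' : Monotone g := fun A B => hmono A B
  have hgreedy_max (k : Fin K) (e : ι) :
      marginal g (prefixImage a k) e ≤ marginal g (prefixImage a k) (a k) :=
    marginal_le_of_forall_notMem hmono' (prefixImage_val a k ▸ hgreedy k) e
  have hfactor : 0 ≤ 1 - 1 / (K : ℝ) :=
    sub_nonneg.2 <| (div_le_one (Nat.cast_pos.mpr hK)).2 (Nat.one_le_cast.mpr hK)
  have hgap : g T - g (univ.image a) ≤ (1 - 1 / K) ^ K * (g T - g ∅) := by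
    rw [← prefixImage_self, ← prefixImage_zero a]
    refine le_geom (u := fun n => g T - g (prefixImage a n)) hfactor K fun n hn => ?_
    have := sub_insert_le_of_marginal_le hmono' hsub (hgreedy_max ⟨n, hn⟩)
      (card_pos.mp (hTcard ▸ hK))
    rwa [← prefixImage_succ, hTcard] at this
  have hpow : (1 - 1 / K : ℝ) ^ K ≤ 1 / Real.exp 1 := by
    simpa [Real.exp_neg] using Real.one_sub_div_pow_le_exp_neg (t := 1) (Nat.one_le_cast.mpr hK)
  have hT0 : 0 ≤ g T := hempty ▸ hmono' (empty_subset T)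
  rw [hempty, sub_zero] at hgap
  linarith [mul_le_mul_of_nonneg_right hpow hT0]
end

section
/- Let σ > 0, and let n, K, d be positive integers. For each t ∈ {1, …, n}, let m_t ≤ K be a nonnegative integer and x_{t,1}, …, x_{t,m_t} ∈ ℝ^d be vectors with ‖x_{t,k}‖_2 ≤ 1. Define the Gram matrices M_0 = I_d and M_t = M_{t−1} + σ^{−2} Σ_{k=1}^{m_t} x_{t,k} x_{t,k}^T for t ≥ 1. Then Σ_{t=1}^n Σ_{k=1}^{m_t} √(x_{t,k}^T M_{t−1}^{−1} x_{t,k}) ≤ K · √( d n log(1 + nK/(d σ²)) / log(1 + 1/σ²) ). -/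
open Matrix Finset

/-!
With `c = σ⁻²` and `q = xᵀ M_t⁻¹ x` for a vector `x` of round `t`, the matrix determinant lemma
and monotonicity of `det` under positive semidefinite updates give
`det M_{t+1} ≥ det M_t · (1 + c q)`. Since `M_t ≥ I` and `‖x‖ ≤ 1` we have `0 ≤ q ≤ 1`, and
concavity turns this into `q · log (1 + c) ≤ log det M_{t+1} - log det M_t`. Summing over the
rounds telescopes to `log det M_n`, which concavity of `log` on the eigenvalues (AM-GM) bounds by
`d log (tr M_n / d) ≤ d log (1 + n K c / d)`. Each round holds at most `K` vectors, and
Cauchy-Schwarz over the `n` rounds gives the square root.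
-/

namespace Matrix

theorem det_add_vecMulVec {ι α : Type*} [Fintype ι] [DecidableEq ι] [CommRing α]
    {A : Matrix ι ι α} (hA : IsUnit A.det) (u v : ι → α) :
    (A + vecMulVec u v).det = A.det * (1 + v ⬝ᵥ (A⁻¹ *ᵥ u)) := by
  rw [vecMulVec_eq Unit, det_add_replicateCol_mul_replicateRow hA]
  congr 1
  rw [det_unique, dotProduct_mulVec]
  simp [Matrix.mul_apply, vecMul, dotProduct]

variable {ι : Type*} [Fintype ι]

theorem posSemidef_vecMulVec_self (v : ι → ℝ) : (vecMulVec v v).PosSemidef := by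
  simpa using posSemidef_vecMulVec_self_star v

variable [DecidableEq ι]

theorem PosDef.det_add_smul_vecMulVec_self {A : Matrix ι ι ℝ} (hA : A.PosDef) (c : ℝ)
    (v : ι → ℝ) : (A + c • vecMulVec v v).det = A.det * (1 + c * (v ⬝ᵥ (A⁻¹ *ᵥ v))) := by
  rw [← smul_vecMulVec, det_add_vecMulVec hA.det_pos.ne'.isUnit, mulVec_smul,
    dotProduct_smul, smul_eq_mul]

theorem PosDef.det_le_det_add_smul_vecMulVec_self {A : Matrix ι ι ℝ} (hA : A.PosDef) {c : ℝ}
    (hc : 0 ≤ c) (v : ι → ℝ) : A.det ≤ (A + c • vecMulVec v v).det := by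
  have hq : 0 ≤ v ⬝ᵥ (A⁻¹ *ᵥ v) := by simpa using hA.inv.posSemidef.dotProduct_mulVec_nonneg v
  rw [hA.det_add_smul_vecMulVec_self]
  exact le_mul_of_one_le_right hA.det_pos.le (by nlinarith)

theorem PosDef.det_le_det_add_smul_sum_vecMulVec_self {κ : Type*} {A : Matrix ι ι ℝ}
    (hA : A.PosDef) {c : ℝ} (hc : 0 ≤ c) (s : Finset κ) (v : κ → ι → ℝ) :
    A.det ≤ (A + c • ∑ k ∈ s, vecMulVec (v k) (v k)).det := by
  classical
  induction s using Finset.induction_on generalizing A with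
  | empty => simp
  | insert a s ha ih =>
    rw [Finset.sum_insert ha, smul_add, ← add_assoc]
    have hA' : (A + c • vecMulVec (v a) (v a)).PosDef :=
      hA.add_posSemidef ((posSemidef_vecMulVec_self (v a)).smul hc)
    exact (hA.det_le_det_add_smul_vecMulVec_self hc (v a)).trans (ih hA')

theorem PosSemidef.dotProduct_inv_mulVec_le {A : Matrix ι ι ℝ} (hA : (A - 1).PosSemidef)
    (v : ι → ℝ) : v ⬝ᵥ (A⁻¹ *ᵥ v) ≤ v ⬝ᵥ v := by
  have hA' : A.PosDef := by simpa using PosDef.one.add_posSemidef hA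
  set y := A⁻¹ *ᵥ v
  have hAy : A *ᵥ y = v := by
    rw [mulVec_mulVec, mul_nonsing_inv _ hA'.det_pos.ne'.isUnit, one_mulVec]
  -- `y ⬝ y ≤ y ⬝ A y = y ⬝ v`, so `0 ≤ (v - y) ⬝ (v - y) ≤ v ⬝ v - v ⬝ y`
  have h₁ : 0 ≤ y ⬝ᵥ (A *ᵥ y) - y ⬝ᵥ y := by
    simpa [sub_mulVec, dotProduct_sub] using hA.dotProduct_mulVec_nonneg y
  have h₂ : 0 ≤ (v - y) ⬝ᵥ (v - y) := by simpa using dotProduct_star_self_nonneg (v - y)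
  rw [hAy, dotProduct_comm y v] at h₁
  simp only [sub_dotProduct, dotProduct_sub, dotProduct_comm y v] at h₂
  linarith

theorem PosDef.log_det_le [Nonempty ι] {A : Matrix ι ι ℝ} (hA : A.PosDef) :
    Real.log A.det ≤ Fintype.card ι * Real.log (A.trace / Fintype.card ι) := by
  have hd : (0 : ℝ) < Fintype.card ι := by exact_mod_cast Fintype.card_pos
  have hpos := hA.eigenvalues_pos
  have jensen := strictConcaveOn_log_Ioi.concaveOn.le_map_sum (t := Finset.univ)
    (w := fun _ => (Fintype.card ι : ℝ)⁻¹) (p := hA.1.eigenvalues)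
    (fun _ _ => by positivity) (by simp [Finset.card_univ, hd.ne']) (fun i _ => hpos i)
  simp only [smul_eq_mul, ← Finset.mul_sum] at jensen
  rw [hA.1.det_eq_prod_eigenvalues, hA.1.trace_eq_sum_eigenvalues]
  simp only [RCLike.ofReal_real_eq_id, id_eq]
  rw [Real.log_prod fun i _ => (hpos i).ne', div_eq_inv_mul]
  calc ∑ i, Real.log (hA.1.eigenvalues i)
      = Fintype.card ι * ((Fintype.card ι : ℝ)⁻¹ * ∑ i, Real.log (hA.1.eigenvalues i)) := by
        field_simp
    _ ≤ _ := mul_le_mul_of_nonneg_left jensen hd.le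

end Matrix

theorem mul_log_one_add_le_log_one_add_mul {s p : ℝ} (hs : -1 < s) (hp0 : 0 ≤ p) (hp1 : p ≤ 1) :
    p * Real.log (1 + s) ≤ Real.log (1 + p * s) := by
  rw [← Real.log_rpow (by linarith)]
  exact Real.log_le_log (Real.rpow_pos_of_pos (by linarith) p)
    (rpow_one_add_le_one_add_mul_self hs.le hp0 hp1)

theorem sum_sum_sqrt_le {n K : ℕ} {m : ℕ → ℕ} {q : ℕ → ℕ → ℝ} {b : ℕ → ℝ}
    (hm : ∀ t < n, m t ≤ K) (hb : ∀ t < n, 0 ≤ b t) (hq : ∀ t < n, ∀ k < m t, q t k ≤ b t) :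
    ∑ t ∈ range n, ∑ k ∈ range (m t), √(q t k) ≤ K * √(n * ∑ t ∈ range n, b t) := by
  have batch : ∀ t ∈ range n, ∑ k ∈ range (m t), √(q t k) ≤ K * √(b t) := by
    intro t ht
    rw [mem_range] at ht
    calc ∑ k ∈ range (m t), √(q t k) ≤ ∑ k ∈ range (m t), √(b t) :=
          sum_le_sum fun k hk => Real.sqrt_le_sqrt (hq t ht k (mem_range.1 hk))
      _ = m t * √(b t) := by simp
      _ ≤ K * √(b t) := by gcongr; exact hm t ht
  have cauchySchwarz : ∑ t ∈ range n, √(b t) ≤ √(n * ∑ t ∈ range n, b t) := by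
    have := Real.sum_mul_le_sqrt_mul_sqrt (range n) (fun _ => 1) (fun t => √(b t))
    simp only [one_mul, one_pow, sum_const, card_range, nsmul_one] at this
    rwa [sum_congr rfl fun t ht => Real.sq_sqrt (hb t (mem_range.1 ht)), ← Real.sqrt_mul
      (Nat.cast_nonneg n)] at this
  calc _ ≤ ∑ t ∈ range n, K * √(b t) := sum_le_sum batch
    _ = K * ∑ t ∈ range n, √(b t) := by rw [mul_sum]
    _ ≤ _ := by gcongr

section GramSequence

variable {ι : Type*} [Fintype ι] [DecidableEq ι] {n K : ℕ} {c : ℝ} {m : ℕ → ℕ}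
  {x : ℕ → ℕ → ι → ℝ} {M : ℕ → Matrix ι ι ℝ} (hM0 : M 0 = 1)
  (hMt : ∀ t < n, M (t + 1) = M t + c • ∑ k ∈ range (m t), vecMulVec (x t k) (x t k))

include hM0 hMt

omit [Fintype ι] in
theorem gram_eq_one_add_smul_sum {t : ℕ} (ht : t ≤ n) :
    M t = 1 + c • ∑ s ∈ range t, ∑ k ∈ range (m s), vecMulVec (x s k) (x s k) := by
  induction t with
  | zero => simpa using hM0
  | succ t ih => rw [hMt t ht, ih (by omega), sum_range_succ, smul_add, add_assoc]

theorem gram_sub_one_posSemidef (hc : 0 ≤ c) {t : ℕ} (ht : t ≤ n) : (M t - 1).PosSemidef := by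
  rw [gram_eq_one_add_smul_sum hM0 hMt ht, add_sub_cancel_left]
  exact (posSemidef_sum _ fun s _ => posSemidef_sum _ fun k _ =>
    posSemidef_vecMulVec_self (x s k)).smul hc

theorem gram_posDef (hc : 0 ≤ c) {t : ℕ} (ht : t ≤ n) : (M t).PosDef := by
  simpa using PosDef.one.add_posSemidef (gram_sub_one_posSemidef hM0 hMt hc ht)

theorem gram_trace_le (hc : 0 ≤ c) (hm : ∀ t < n, m t ≤ K)
    (hx : ∀ t < n, ∀ k < m t, x t k ⬝ᵥ x t k ≤ 1) :
    (M n).trace ≤ Fintype.card ι + c * (n * K) := by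
  have hsum : ∑ s ∈ range n, ∑ k ∈ range (m s), x s k ⬝ᵥ x s k ≤ n * K := by
    calc _ ≤ ∑ s ∈ range n, ∑ k ∈ range (m s), (1 : ℝ) :=
          sum_le_sum fun s hs => sum_le_sum fun k hk =>
            hx s (mem_range.1 hs) k (mem_range.1 hk)
      _ ≤ ∑ s ∈ range n, (K : ℝ) :=
          sum_le_sum fun s hs => by simpa using hm s (mem_range.1 hs)
      _ = n * K := by simp
  rw [gram_eq_one_add_smul_sum hM0 hMt le_rfl, trace_add, trace_one, trace_smul, trace_sum]
  simp only [trace_sum, trace_vecMulVec, smul_eq_mul]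
  gcongr

theorem log_det_gram_le_log_det_gram_succ (hc : 0 ≤ c) {t : ℕ} (ht : t < n) :
    Real.log (M t).det ≤ Real.log (M (t + 1)).det := by
  have hpd := gram_posDef hM0 hMt hc ht.le
  rw [hMt t ht]
  exact Real.log_le_log hpd.det_pos (hpd.det_le_det_add_smul_sum_vecMulVec_self hc _ _)

theorem mul_log_le_log_det_gram_succ_sub (hc : 0 ≤ c)
    (hx : ∀ t < n, ∀ k < m t, x t k ⬝ᵥ x t k ≤ 1) {t k : ℕ} (ht : t < n) (hk : k < m t) :
    x t k ⬝ᵥ ((M t)⁻¹ *ᵥ x t k) * Real.log (1 + c) ≤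
      Real.log (M (t + 1)).det - Real.log (M t).det := by
  have hpd := gram_posDef hM0 hMt hc ht.le
  set q := x t k ⬝ᵥ ((M t)⁻¹ *ᵥ x t k)
  have hq0 : 0 ≤ q := by simpa using hpd.inv.posSemidef.dotProduct_mulVec_nonneg (x t k)
  have hq1 : q ≤ 1 := ((gram_sub_one_posSemidef hM0 hMt hc ht.le).dotProduct_inv_mulVec_le _).trans
    (hx t ht k hk)
  -- `M (t + 1)` dominates the rank-one update of `M t` by the `k`-th vector alone
  have hdet : (M t).det * (1 + c * q) ≤ (M (t + 1)).det := by
    rw [hMt t ht, ← add_sum_erase _ _ (mem_range.2 hk), smul_add, ← add_assoc,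
      ← hpd.det_add_smul_vecMulVec_self]
    exact (hpd.add_posSemidef ((posSemidef_vecMulVec_self _).smul hc))
      |>.det_le_det_add_smul_sum_vecMulVec_self hc _ _
  have hpos : 0 < 1 + c * q := by positivity
  have hlog := Real.log_le_log (mul_pos hpd.det_pos hpos) hdet
  rw [Real.log_mul hpd.det_pos.ne' hpos.ne'] at hlog
  have := mul_log_one_add_le_log_one_add_mul (s := c) (by linarith) hq0 hq1
  rw [mul_comm q c] at this
  linarith

theorem log_det_gram_le [Nonempty ι] (hc : 0 ≤ c) (hm : ∀ t < n, m t ≤ K)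
    (hx : ∀ t < n, ∀ k < m t, x t k ⬝ᵥ x t k ≤ 1) :
    Real.log (M n).det ≤ Fintype.card ι * Real.log (1 + c * (n * K) / Fintype.card ι) := by
  have hpd := gram_posDef hM0 hMt hc le_rfl
  have hd : (0 : ℝ) < Fintype.card ι := by exact_mod_cast Fintype.card_pos
  refine hpd.log_det_le.trans (mul_le_mul_of_nonneg_left ?_ hd.le)
  gcongr
  · exact div_pos hpd.trace_pos hd
  · rw [one_add_div hd.ne']
    gcongr
    exact gram_trace_le hM0 hMt hc hm hx

end GramSequence

theorem stmt_15_general (σ : ℝ) (hσ : 0 < σ) (n K d : ℕ) (hd : 0 < d)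
    (m : ℕ → ℕ) (hm : ∀ t < n, m t ≤ K)
    (x : ℕ → ℕ → Fin d → ℝ)
    (hx : ∀ t < n, ∀ k < m t, Real.sqrt (∑ j, x t k j ^ 2) ≤ 1)
    (M : ℕ → Matrix (Fin d) (Fin d) ℝ)
    (hM0 : M 0 = 1)
    (hMt : ∀ t < n, M (t + 1) =
      M t + (σ ^ 2)⁻¹ • ∑ k ∈ Finset.range (m t), vecMulVec (x t k) (x t k)) :
    ∑ t ∈ Finset.range n, ∑ k ∈ Finset.range (m t),
        Real.sqrt (x t k ⬝ᵥ ((M t)⁻¹ *ᵥ x t k)) ≤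
      (K : ℝ) * Real.sqrt ((d : ℝ) * n * Real.log (1 + n * K / (d * σ ^ 2)) /
        Real.log (1 + 1 / σ ^ 2)) := by
  have : Nonempty (Fin d) := ⟨⟨0, hd⟩⟩
  set c := (σ ^ 2)⁻¹
  have hc : 0 ≤ c := by positivity
  have hx' : ∀ t < n, ∀ k < m t, x t k ⬝ᵥ x t k ≤ 1 := fun t ht k hk => by
    simpa [dotProduct, sq] using hx t ht k hk
  have hL : 0 < Real.log (1 + c) := Real.log_pos (lt_add_of_pos_right 1 (by positivity))
  set b : ℕ → ℝ := fun t => (Real.log (M (t + 1)).det - Real.log (M t).det) / Real.log (1 + c)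
  have hb : ∑ t ∈ range n, b t = Real.log (M n).det / Real.log (1 + c) := by
    rw [← sum_div, sum_range_sub (fun t => Real.log (M t).det), hM0]
    simp
  calc _ ≤ K * √(n * ∑ t ∈ range n, b t) :=
        sum_sum_sqrt_le hm
          (fun t ht => div_nonneg
            (sub_nonneg.2 (log_det_gram_le_log_det_gram_succ hM0 hMt hc ht)) hL.le)
          (fun t ht k hk =>
            (le_div_iff₀ hL).2 (mul_log_le_log_det_gram_succ_sub hM0 hMt hc hx' ht hk))
    _ ≤ _ := by
      gcongr
      have harg : c * (n * K) / d = n * K / (d * σ ^ 2) := by simp only [c]; field_simp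
      calc n * ∑ t ∈ range n, b t
          ≤ n * (d * Real.log (1 + c * (n * K) / d) / Real.log (1 + c)) := by
            rw [hb]
            gcongr
            simpa using log_det_gram_le hM0 hMt hc hm hx'
        _ = _ := by rw [harg, one_div]; ring

/-- Worst-case bound on the sum of confidence widths for the Gram matrices
`M 0 = I`, `M (t+1) = M t + σ⁻² ∑_{k < m t} x t k (x t k)ᵀ`:
`∑_{t<n} ∑_{k<m t} √(x t kᵀ (M t)⁻¹ x t k) ≤ K √(d n log(1 + nK/(dσ²)) / log(1 + 1/σ²))`. -/
theorem stmt_15 (σ : ℝ) (hσ : 0 < σ) (n K d : ℕ) (hn : 0 < n) (hK : 0 < K) (hd : 0 < d)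
    (m : ℕ → ℕ) (hm : ∀ t < n, m t ≤ K)
    (x : ℕ → ℕ → Fin d → ℝ)
    (hx : ∀ t < n, ∀ k < m t, Real.sqrt (∑ j, x t k j ^ 2) ≤ 1)
    (M : ℕ → Matrix (Fin d) (Fin d) ℝ)
    (hM0 : M 0 = 1)
    (hMt : ∀ t < n, M (t + 1) =
      M t + (σ ^ 2)⁻¹ • ∑ k ∈ Finset.range (m t), vecMulVec (x t k) (x t k)) :
    ∑ t ∈ Finset.range n, ∑ k ∈ Finset.range (m t),
        Real.sqrt (x t k ⬝ᵥ ((M t)⁻¹ *ᵥ x t k)) ≤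
      (K : ℝ) * Real.sqrt ((d : ℝ) * n * Real.log (1 + n * K / (d * σ ^ 2)) /
        Real.log (1 + 1 / σ ^ 2)) :=
  stmt_15_general σ hσ n K d hd m hm x hx M hM0 hMt
end
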